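/- Let B be a nonempty open metric ball in the torus 𝕋^d = ℝ^d/ℤ^d. Then there exist a finite subgroup G ⊂ 𝕋^d and an orthogonal projection P on L²(𝕋^d) localized on B such that the projections T_γ P T_{-γ}, γ ∈ G, are pairwise orthogonal and Σ_{γ∈G} T_γ P T_{-γ} f = f for all f ∈ L²(𝕋^d). -/

import Mathlib

/-!
Pick `n` with `1 / n < r`. In each coordinate, `[c, c + 1/n)` is a fundamental domain for
`(1/n)ℤ ⊇ ℤ` acting on `ℝ`, so its image in `𝕋¹` is a set of coset representatives of the
`n`-torsion subgroup; taking products, the cube `s` of side `1/n` centred at `x₀` is a set of coset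
representatives of the finite `n`-torsion subgroup `G` of `𝕋^d`, and `s ⊆ B`.
Let `P` be multiplication by `𝟙_s`. Then `T_γ P T_{-γ}` is multiplication by `𝟙_{γ + s}`, and the
translates `γ + s`, `γ ∈ G`, partition `𝕋^d`.
-/

open MeasureTheory Metric
open scoped RealInnerProductSpace Pointwise ENNReal
noncomputable section

/-- The torus `𝕋^d = ℝ^d/ℤ^d`. -/
abbrev Torus (d : ℕ) : Type := Fin d → AddCircle (1 : ℝ)

/-- The translation operator `T_γ f = f(· - γ)` on `L²(𝕋^d)`. -/
def transTorus {d : ℕ} (γ : Torus d) :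
    Lp ℝ 2 (volume : Measure (Torus d)) →L[ℝ] Lp ℝ 2 (volume : Measure (Torus d)) :=
  (Lp.compMeasurePreservingₗᵢ ℝ (fun x : Torus d => x - γ)
    (measurePreserving_sub_right volume γ)).toContinuousLinearMap

open Set

namespace AddSubgroup

theorem isComplement_zmultiples_Ico {G : Type*} [AddCommGroup G] [LinearOrder G]
    [IsOrderedAddMonoid G] [Archimedean G] {p : G} (hp : 0 < p) (c : G) :
    IsComplement (zmultiples p : Set G) (Ico c (c + p)) := by
  refine isComplement_iff_existsUnique_neg_add_mem.2 fun t => ?_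
  obtain ⟨m, hm, hm_unique⟩ := existsUnique_sub_zsmul_mem_Ico hp t c
  refine ⟨⟨m • p, m, rfl⟩, show -(m • p) + t ∈ _ by rwa [neg_add_eq_sub], ?_⟩
  rintro ⟨_, k, rfl⟩ hk
  have hk : t - k • p ∈ Ico c (c + p) := by rwa [← neg_add_eq_sub]
  simp only [hm_unique k hk]

theorem IsComplement.image_mk {α : Type*} [AddCommGroup α] {L N : AddSubgroup α} {A : Set α}
    (h : IsComplement (L : Set α) A) (hNL : N ≤ L) :
    IsComplement (L.map (QuotientAddGroup.mk' N) : Set (α ⧸ N)) ((↑) '' A) := by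
  refine isComplement_iff_existsUnique_neg_add_mem.2 fun g => ?_
  obtain ⟨t, rfl⟩ := QuotientAddGroup.mk_surjective g
  obtain ⟨l, hl, hl_unique⟩ := isComplement_iff_existsUnique_neg_add_mem.1 h t
  refine ⟨⟨l, mem_map_of_mem _ l.2⟩, ⟨_, hl, rfl⟩, ?_⟩
  rintro ⟨_, l', hl', rfl⟩ ⟨a, ha, hat⟩
  obtain ⟨n, hn, rfl⟩ : ∃ n ∈ N, a = -l' + t + n :=
    ⟨-(-l' + t) + a, QuotientAddGroup.eq.1 hat.symm, by abel⟩
  have hl_eq : (⟨l' - n, L.sub_mem hl' (hNL hn)⟩ : L) = l :=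
    hl_unique _ (by convert ha using 1; simp only [neg_sub]; abel)
  refine Subtype.ext ?_
  simp only [QuotientAddGroup.coe_mk', ← hl_eq, QuotientAddGroup.mk_sub,
    (QuotientAddGroup.eq_zero_iff n).2 hn, sub_zero]

theorem IsComplement.pi {ι : Type*} {G : ι → Type*} [∀ i, AddGroup (G i)]
    {S T : ∀ i, Set (G i)} (h : ∀ i, IsComplement (S i) (T i)) :
    IsComplement (univ.pi S) (univ.pi T) := by
  refine isComplement_iff_existsUnique_neg_add_mem.2 fun g => ?_
  choose s hs hs_unique using fun i => isComplement_iff_existsUnique_neg_add_mem.1 (h i) (g i)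
  refine ⟨⟨fun i => s i, mem_univ_pi.2 fun i => (s i).2⟩, mem_univ_pi.2 hs, ?_⟩
  rintro ⟨y, hy⟩ hyT
  refine Subtype.ext (funext fun i => ?_)
  exact congrArg Subtype.val (hs_unique i ⟨y i, hy i trivial⟩ (hyT i trivial))

end AddSubgroup

namespace MeasureTheory.Lp

section indicator

variable {α E : Type*} (𝕜 : Type*) [MeasurableSpace α] {μ : Measure α} {p : ℝ≥0∞} [Fact (1 ≤ p)]
  [NormedAddCommGroup E] [NormedField 𝕜] [NormedSpace 𝕜 E] {s t : Set α}

def indicatorCLM (hs : MeasurableSet s) : Lp E p μ →L[𝕜] Lp E p μ :=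
  LinearMap.mkContinuous
    { toFun := fun f => ((Lp.memLp f).indicator hs).toLp (s.indicator f)
      map_add' := fun f g => by
        rw [← MemLp.toLp_add, MemLp.toLp_eq_toLp_iff]
        filter_upwards [Lp.coeFn_add f g] with x hx
        by_cases hxs : x ∈ s
        · simp only [Pi.add_apply, indicator_of_mem hxs, hx]
        · simp only [Pi.add_apply, indicator_of_notMem hxs, add_zero]
      map_smul' := fun c f => by
        rw [RingHom.id_apply, ← MemLp.toLp_const_smul, MemLp.toLp_eq_toLp_iff]
        filter_upwards [Lp.coeFn_smul c f] with x hx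
        by_cases hxs : x ∈ s
        · simp only [Pi.smul_apply, indicator_of_mem hxs, hx]
        · simp only [Pi.smul_apply, indicator_of_notMem hxs, smul_zero] }
    1 fun f => by
      rw [one_mul, LinearMap.coe_mk, AddHom.coe_mk, Lp.norm_toLp, Lp.norm_def]
      exact ENNReal.toReal_mono (Lp.eLpNorm_ne_top f) (eLpNorm_indicator_le _)

variable (hs : MeasurableSet s) (ht : MeasurableSet t)

theorem coeFn_indicatorCLM (f : Lp E p μ) : ⇑(indicatorCLM 𝕜 hs f) =ᵐ[μ] s.indicator f :=
  ((Lp.memLp f).indicator hs).coeFn_toLp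

theorem indicatorCLM_apply_eq_zero_of_notMem (f : Lp E p μ) :
    ∀ᵐ x ∂μ, x ∉ s → indicatorCLM 𝕜 hs f x = 0 := by
  filter_upwards [coeFn_indicatorCLM 𝕜 hs f] with x hx hxs
  rw [hx, indicator_of_notMem hxs]

variable {𝕜}

theorem indicatorCLM_eq_zero_of_ae_eq_zero {f : Lp E p μ} (hf : ∀ᵐ x ∂μ, x ∈ s → f x = 0) :
    indicatorCLM 𝕜 hs f = 0 := by
  refine Lp.ext ?_
  filter_upwards [coeFn_indicatorCLM 𝕜 hs f, hf, Lp.coeFn_zero E p μ] with x h₁ h₂ h₃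
  rw [h₁, h₃, Pi.zero_apply]
  by_cases hxs : x ∈ s
  · rw [indicator_of_mem hxs, h₂ hxs]
  · exact indicator_of_notMem hxs _

theorem indicatorCLM_indicatorCLM (f : Lp E p μ) :
    indicatorCLM 𝕜 hs (indicatorCLM 𝕜 ht f) = indicatorCLM 𝕜 (hs.inter ht) f := by
  refine Lp.ext ?_
  filter_upwards [coeFn_indicatorCLM 𝕜 hs (indicatorCLM 𝕜 ht f), coeFn_indicatorCLM 𝕜 ht f,
    coeFn_indicatorCLM 𝕜 (hs.inter ht) f] with x h₁ h₂ h₃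
  rw [h₁, h₃, ← indicator_indicator]
  by_cases hxs : x ∈ s
  · rw [indicator_of_mem hxs, indicator_of_mem hxs, h₂]
  · rw [indicator_of_notMem hxs, indicator_of_notMem hxs]

theorem indicatorCLM_idem (f : Lp E p μ) :
    indicatorCLM 𝕜 hs (indicatorCLM 𝕜 hs f) = indicatorCLM 𝕜 hs f := by
  simp only [indicatorCLM_indicatorCLM, inter_self]

theorem indicatorCLM_indicatorCLM_of_disjoint (hst : Disjoint s t) (f : Lp E p μ) :
    indicatorCLM 𝕜 hs (indicatorCLM 𝕜 ht f) = 0 := by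
  simp only [indicatorCLM_indicatorCLM, hst.inter_eq]
  exact indicatorCLM_eq_zero_of_ae_eq_zero _ (ae_of_all _ fun _ h => h.elim)

theorem sum_indicatorCLM {ι : Type*} (F : Finset ι) {A : ι → Set α}
    (hA : ∀ i, MeasurableSet (A i)) (hdisj : (F : Set ι).PairwiseDisjoint A)
    (hcover : ⋃ i ∈ F, A i = univ) (f : Lp E p μ) :
    ∑ i ∈ F, indicatorCLM 𝕜 (hA i) f = f := by
  refine Lp.ext ?_
  filter_upwards [coeFn_fun_finsetSum F fun i => indicatorCLM 𝕜 (hA i) f,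
    (F.eventually_all).2 fun i _ => coeFn_indicatorCLM 𝕜 (hA i) f] with x hsum hterms
  rw [hsum, Finset.sum_congr rfl hterms, ← Finset.indicator_biUnion_apply F A hdisj, hcover,
    indicator_univ]

theorem compMeasurePreserving_indicatorCLM {φ ψ : α → α} (hφ : MeasurePreserving φ μ μ)
    (hψ : MeasurePreserving ψ μ μ) (hψφ : Function.LeftInverse ψ φ) (f : Lp E p μ) :
    compMeasurePreserving φ hφ (indicatorCLM 𝕜 hs (compMeasurePreserving ψ hψ f)) =
      indicatorCLM 𝕜 (hs.preimage hφ.measurable) f := by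
  refine Lp.ext ?_
  calc _ =ᵐ[μ] (indicatorCLM 𝕜 hs (compMeasurePreserving ψ hψ f)) ∘ φ :=
        coeFn_compMeasurePreserving _ hφ
    _ =ᵐ[μ] s.indicator (f ∘ ψ) ∘ φ := hφ.quasiMeasurePreserving.ae_eq_comp <|
        (coeFn_indicatorCLM 𝕜 hs _).trans (coeFn_compMeasurePreserving f hψ).indicator
    _ = (φ ⁻¹' s).indicator f := by
        ext x
        rw [Function.comp_apply, ← indicator_comp_right, Function.comp_assoc, hψφ.comp_eq_id,
          Function.comp_id]
    _ =ᵐ[μ] _ := (coeFn_indicatorCLM 𝕜 _ f).symm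

end indicator

section inner

variable {α E 𝕜 : Type*} [MeasurableSpace α] {μ : Measure α} [RCLike 𝕜] [NormedAddCommGroup E]
  [InnerProductSpace 𝕜 E] {s : Set α}

theorem inner_indicatorCLM_left (hs : MeasurableSet s) (f g : Lp E 2 μ) :
    inner 𝕜 (indicatorCLM 𝕜 hs f) g = inner 𝕜 f (indicatorCLM 𝕜 hs g) := by
  rw [L2.inner_def, L2.inner_def]
  refine integral_congr_ae ?_
  filter_upwards [coeFn_indicatorCLM 𝕜 hs f, coeFn_indicatorCLM 𝕜 hs g] with x hf hg
  rw [hf, hg]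
  by_cases hxs : x ∈ s
  · rw [indicator_of_mem hxs, indicator_of_mem hxs]
  · rw [indicator_of_notMem hxs, indicator_of_notMem hxs, inner_zero_left, inner_zero_right]

end inner

end MeasureTheory.Lp

theorem QuotientAddGroup.measurableSet_image_mk {α : Type*} [AddGroup α] [MeasurableSpace α]
    [MeasurableAdd α] {N : AddSubgroup α} [Countable N] {A : Set α} (hA : MeasurableSet A) :
    MeasurableSet ((↑) '' A : Set (α ⧸ N)) := by
  refine measurableSet_quotient.2 ?_
  change MeasurableSet (QuotientAddGroup.mk ⁻¹' ((↑) '' A : Set (α ⧸ N)))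
  rw [QuotientAddGroup.preimage_image_mk]
  exact MeasurableSet.iUnion fun n => hA.preimage (measurable_add_const _)

namespace AddCircle

theorem isComplement_zmultiples_image_Ico {T p : ℝ} (hp : 0 < p)
    (hT : T ∈ AddSubgroup.zmultiples p) (c : ℝ) :
    AddSubgroup.IsComplement (AddSubgroup.zmultiples (p : AddCircle T) : Set (AddCircle T))
      ((↑) '' Ico c (c + p)) := by
  have := (AddSubgroup.isComplement_zmultiples_Ico hp c).image_mk
    ((AddSubgroup.zmultiples_le (H := AddSubgroup.zmultiples p)).2 hT)
  rwa [AddMonoidHom.map_zmultiples] at this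

theorem image_Ico_subset_closedBall {T : ℝ} (c p : ℝ) :
    ((↑) '' Ico c (c + p) : Set (AddCircle T)) ⊆
      closedBall ((c + p / 2 : ℝ) : AddCircle T) (p / 2) := by
  rintro _ ⟨t, ht, rfl⟩
  rw [mem_closedBall, dist_eq_norm, ← coe_sub]
  refine QuotientAddGroup.norm_mk_le_norm.trans ?_
  rw [Real.norm_eq_abs, abs_le]
  constructor <;> linarith [ht.1, ht.2]

end AddCircle

section Torus

variable {d : ℕ} {s : Set (Torus d)} (hs : MeasurableSet s)

theorem transTorus_indicatorCLM_transTorus_neg (γ : Torus d)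
    (f : Lp ℝ 2 (volume : Measure (Torus d))) :
    transTorus γ (Lp.indicatorCLM ℝ hs (transTorus (-γ) f)) =
      Lp.indicatorCLM ℝ (hs.preimage (measurable_sub_const γ)) f :=
  Lp.compMeasurePreserving_indicatorCLM hs _ _ (fun x => by simp) f

variable {G : AddSubgroup (Torus d)} (hGs : AddSubgroup.IsComplement (G : Set (Torus d)) s)
include hGs

theorem pairwiseDisjoint_preimage_sub_const :
    (G : Set (Torus d)).PairwiseDisjoint fun γ => (· - γ) ⁻¹' s := by
  have hvadd : (fun γ => (· - γ) ⁻¹' s) = (· +ᵥ s) := by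
    ext γ x
    rw [mem_vadd_set_iff_neg_vadd_mem, vadd_eq_add, neg_add_eq_sub, mem_preimage]
  exact hvadd ▸ hGs.pairwiseDisjoint_vadd

theorem transTorus_indicatorCLM_transTorus_neg_orthogonal {γ γ' : Torus d} (hγ : γ ∈ G)
    (hγ' : γ' ∈ G) (hne : γ ≠ γ') (f : Lp ℝ 2 (volume : Measure (Torus d))) :
    transTorus γ (Lp.indicatorCLM ℝ hs (transTorus (-γ)
      (transTorus γ' (Lp.indicatorCLM ℝ hs (transTorus (-γ') f))))) = 0 := by
  simp only [transTorus_indicatorCLM_transTorus_neg]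
  exact Lp.indicatorCLM_indicatorCLM_of_disjoint _ _
    (pairwiseDisjoint_preimage_sub_const hGs hγ hγ' hne) f

theorem sum_transTorus_indicatorCLM_transTorus_neg (hG : (G : Set (Torus d)).Finite)
    (f : Lp ℝ 2 (volume : Measure (Torus d))) :
    ∑ γ ∈ hG.toFinset, transTorus γ (Lp.indicatorCLM ℝ hs (transTorus (-γ) f)) = f := by
  simp only [transTorus_indicatorCLM_transTorus_neg]
  refine Lp.sum_indicatorCLM _ _ (by simpa using pairwiseDisjoint_preimage_sub_const hGs) ?_ f
  refine eq_univ_of_forall fun x => ?_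
  obtain ⟨γ, hxγ⟩ := (AddSubgroup.isComplement_iff_existsUnique_neg_add_mem.1 hGs x).exists
  exact mem_biUnion (hG.mem_toFinset.2 γ.2) (show x - γ ∈ s by rwa [← neg_add_eq_sub])

end Torus

theorem Torus.exists_finite_addSubgroup_isComplement_subset_closedBall {d : ℕ} (x₀ : Torus d)
    {δ : ℝ} (hδ : 0 < δ) :
    ∃ (G : AddSubgroup (Torus d)) (s : Set (Torus d)), (G : Set (Torus d)).Finite ∧
      MeasurableSet s ∧ AddSubgroup.IsComplement (G : Set (Torus d)) s ∧ s ⊆ closedBall x₀ δ := by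
  obtain ⟨n, hn⟩ := exists_nat_one_div_lt hδ
  set p : ℝ := 1 / (n + 1)
  have hp : 0 < p := Nat.one_div_pos_of_nat
  have hp_period : (n + 1) • p = 1 := by
    simp only [p, nsmul_eq_mul]; push_cast; field_simp
  choose c hc using fun i => QuotientAddGroup.mk_surjective (x₀ i)
  refine ⟨AddSubgroup.pi univ fun _ => AddSubgroup.zmultiples (p : AddCircle (1 : ℝ)),
    univ.pi fun i => (↑) '' Ico (c i - p / 2) (c i - p / 2 + p), ?_,
    .univ_pi fun _ => QuotientAddGroup.measurableSet_image_mk measurableSet_Ico, ?_, ?_⟩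
  · rw [AddSubgroup.coe_pi]
    refine Finite.pi fun _ => IsOfFinAddOrder.finite_zmultiples ?_
    exact isOfFinAddOrder_iff_nsmul_eq_zero.2 ⟨n + 1, n.succ_pos, by
      rw [← AddCircle.coe_nsmul, hp_period, AddCircle.coe_period]⟩
  · rw [AddSubgroup.coe_pi]
    exact .pi fun i => AddCircle.isComplement_zmultiples_image_Ico hp
      (hp_period ▸ nsmul_mem (AddSubgroup.mem_zmultiples p) _) _
  · rw [closedBall_pi _ hδ.le]
    refine pi_mono fun i _ => ?_
    refine (AddCircle.image_Ico_subset_closedBall (T := 1) (c i - p / 2) p).trans ?_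
    rw [sub_add_cancel, hc i]
    exact closedBall_subset_closedBall (by linarith)

theorem exists_projection_on_torus_ball_finite_subgroup_decomposition
    (d : ℕ) (x₀ : Torus d) (r : ℝ) (hr : 0 < r) :
    ∃ (G : AddSubgroup (Torus d)) (hG : (G : Set (Torus d)).Finite)
      (P : Lp ℝ 2 (volume : Measure (Torus d)) →L[ℝ] Lp ℝ 2 (volume : Measure (Torus d))),
      -- `P` is an orthogonal projection
      (∀ f g, ⟪P f, g⟫ = ⟪f, P g⟫) ∧
      (∀ f, P (P f) = P f) ∧
      -- `P` is localized on the ball `B = ball x₀ r`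
      (∃ K : Set (Torus d), IsCompact K ∧ K ⊆ Metric.ball x₀ r ∧
        (∀ f, ∀ᵐ x ∂(volume : Measure (Torus d)), x ∉ K → P f x = 0) ∧
        (∀ f, (∀ᵐ x ∂(volume : Measure (Torus d)), x ∈ K → f x = 0) → P f = 0)) ∧
      -- the conjugated projections are pairwise orthogonal
      (∀ γ γ' : Torus d, γ ∈ G → γ' ∈ G → γ ≠ γ' → ∀ f,
        transTorus γ (P (transTorus (-γ) (transTorus γ' (P (transTorus (-γ') f))))) = 0) ∧
      -- `Σ_{γ ∈ G} T_γ P T_{-γ} f = f` for all `f ∈ L²(𝕋^d)`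
      (∀ f, ∑ γ ∈ hG.toFinset, transTorus γ (P (transTorus (-γ) f)) = f) := by
  obtain ⟨G, s, hG, hs, hGs, hsK⟩ :=
    Torus.exists_finite_addSubgroup_isComplement_subset_closedBall x₀ (half_pos hr)
  refine ⟨G, hG, Lp.indicatorCLM ℝ hs, Lp.inner_indicatorCLM_left hs, Lp.indicatorCLM_idem hs,
    ⟨closedBall x₀ (r / 2), isCompact_closedBall x₀ _, closedBall_subset_ball (half_lt_self hr),
      fun f => ?_, fun f hf => ?_⟩,
    fun γ γ' hγ hγ' hne => transTorus_indicatorCLM_transTorus_neg_orthogonal hs hGs hγ hγ' hne,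
    sum_transTorus_indicatorCLM_transTorus_neg hs hGs hG⟩
  · filter_upwards [Lp.indicatorCLM_apply_eq_zero_of_notMem ℝ hs f] with x hx hxK
    exact hx fun hxs => hxK (hsK hxs)
  · exact Lp.indicatorCLM_eq_zero_of_ae_eq_zero hs (hf.mono fun x hx hxs => hx (hsK hxs))

end
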